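/- (Konyagin–Shkredov) Let q be a prime power, ψ the canonical additive character of F_q, and X1 ⊆ X ⊆ F_q finite nonempty sets. Then (1/q) Σ_{y ∈ F_q} |Σ_{x ∈ X} ψ(x y)| ≥ |X1|² / (|X|^{1/2} · E(X1)^{1/2}), where E(X1) is the additive energy of X1. -/

import Mathlib

open Finset

/-- The canonical additive character `ψ(x) = e^{2πi Tr(x)/p}` of a finite
field `F` of characteristic `p`. -/
noncomputable def canonChar (p : ℕ) (F : Type*) [Field F] [Fintype F]
    [Algebra (ZMod p) F] (x : F) : ℂ :=
  Complex.exp (2 * Real.pi * Complex.I *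
    ((Algebra.trace (ZMod p) F x).val : ℂ) / p)

/-- Additive energy of a finite subset of `F`. -/
def addEnergy {F : Type*} [AddCommGroup F] [DecidableEq F] (Z : Finset F) : ℕ :=
  (((Z ×ˢ Z) ×ˢ (Z ×ˢ Z)).filter (fun z => z.1.1 + z.2.1 = z.1.2 + z.2.2)).card

/-!
Write `Ŝ_A(y) = ∑_{x ∈ A} ψ(x y)`. Since `ψ` is primitive, `∑_y ψ(t y)` is `q` at `t = 0` and
vanishes otherwise, so expanding products of exponential sums counts solutions of linear
equations: `∑_y Ŝ_X(y) conj Ŝ_{X₁}(y) = q |X₁|`, `∑_y |Ŝ_X(y)|² = q |X|` and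
`∑_y |Ŝ_{X₁}(y)|⁴ = q E(X₁)`. Cauchy–Schwarz with weights `|Ŝ_X|` gives
`(q |X₁|)² ≤ (∑ |Ŝ_X|) (∑ |Ŝ_X| |Ŝ_{X₁}|²)`, and a second Cauchy–Schwarz bounds the last sum by
`√(q |X|) √(q E(X₁))`.
-/

open ComplexConjugate

lemma sq_sum_mul_le_sum_mul_sqrt_mul_sqrt {ι : Type*} (s : Finset ι) {f : ι → ℝ} (g : ι → ℝ)
    (hf : ∀ i ∈ s, 0 ≤ f i) :
    (∑ i ∈ s, f i * g i) ^ 2 ≤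
      (∑ i ∈ s, f i) * (√(∑ i ∈ s, f i ^ 2) * √(∑ i ∈ s, g i ^ 4)) := by
  calc (∑ i ∈ s, f i * g i) ^ 2 ≤ (∑ i ∈ s, f i) * ∑ i ∈ s, f i * g i ^ 2 :=
        sum_sq_le_sum_mul_sum_of_sq_le_mul s hf (fun i hi => mul_nonneg (hf i hi) (sq_nonneg _))
          fun i _ => (by ring : (f i * g i) ^ 2 = _).le
    _ ≤ (∑ i ∈ s, f i) * (√(∑ i ∈ s, f i ^ 2) * √(∑ i ∈ s, g i ^ 4)) := by
      gcongr
      · exact sum_nonneg hf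
      · have h := Real.sum_mul_le_sqrt_mul_sqrt s f fun i => g i ^ 2
        simp_rw [← pow_mul] at h
        exact h

section ExpSum
variable {R : Type*} [CommRing R] [Fintype R]

def expSum (ψ : AddChar R ℂ) (A : Finset R) (y : R) : ℂ := ∑ x ∈ A, ψ (x * y)

lemma expSum_mul_conj (ψ : AddChar R ℂ) (A B : Finset R) (y : R) :
    expSum ψ A y * conj (expSum ψ B y) = ∑ z ∈ A ×ˢ B, ψ ((z.1 - z.2) * y) := by
  simp_rw [expSum, map_sum, ← AddChar.map_neg_eq_conj, sum_mul_sum, ← sum_product',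
    ← AddChar.map_add_eq_mul, sub_mul, sub_eq_add_neg]

variable [DecidableEq R] {ψ : AddChar R ℂ}

lemma sum_sum_apply_mul_eq {ι : Type*} (hψ : ψ.IsPrimitive) (s : Finset ι) (f : ι → R) :
    ∑ y, ∑ z ∈ s, ψ (f z * y) = Fintype.card R * #{z ∈ s | f z = 0} := by
  have hz : ∀ z, ∑ y, ψ (f z * y) = if f z = 0 then (Fintype.card R : ℂ) else 0 := fun z => by
    simp_rw [mul_comm (f z)]
    rw [AddChar.sum_mulShift _ hψ, Nat.cast_ite, Nat.cast_zero]
  rw [sum_comm]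
  simp_rw [hz, sum_ite, sum_const_zero, add_zero, sum_const, nsmul_eq_mul, mul_comm]

lemma sum_expSum_mul_conj (hψ : ψ.IsPrimitive) (A B : Finset R) :
    ∑ y, expSum ψ A y * conj (expSum ψ B y) = Fintype.card R * #(A ∩ B) := by
  simp_rw [expSum_mul_conj, sum_sum_apply_mul_eq hψ, sub_eq_zero]
  congr 2
  refine card_nbij' Prod.fst (fun a => (a, a)) ?_ ?_ ?_ ?_ <;> intro z <;> aesop

lemma sum_norm_expSum_sq (hψ : ψ.IsPrimitive) (A : Finset R) :
    ∑ y, ‖expSum ψ A y‖ ^ 2 = Fintype.card R * #A := by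
  have h := sum_expSum_mul_conj hψ A A
  simp_rw [Complex.mul_conj', inter_self] at h
  exact_mod_cast h

lemma sum_norm_expSum_pow_four (hψ : ψ.IsPrimitive) (A : Finset R) :
    ∑ y, ‖expSum ψ A y‖ ^ 4 = Fintype.card R * A.addEnergy A := by
  have h : ∀ y, ((‖expSum ψ A y‖ ^ 4 : ℝ) : ℂ) =
      ∑ z ∈ (A ×ˢ A) ×ˢ (A ×ˢ A), ψ ((z.1.1 - z.1.2 + (z.2.1 - z.2.2)) * y) := by
    intro y
    rw [show 4 = 2 * 2 from rfl, pow_mul, Complex.ofReal_pow, Complex.ofReal_pow,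
      ← Complex.mul_conj', expSum_mul_conj, sq, sum_mul_sum, ← sum_product']
    simp_rw [← AddChar.map_add_eq_mul, add_mul]
  have h' := sum_sum_apply_mul_eq hψ ((A ×ˢ A) ×ˢ (A ×ˢ A))
    fun z => z.1.1 - z.1.2 + (z.2.1 - z.2.2)
  simp_rw [← h, ← Complex.ofReal_sum] at h'
  have hE : #{z ∈ (A ×ˢ A) ×ˢ (A ×ˢ A) | z.1.1 - z.1.2 + (z.2.1 - z.2.2) = 0} = A.addEnergy A := by
    rw [Finset.addEnergy]
    congr 1
    refine filter_congr fun z _ => ?_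
    constructor <;> intro h <;> linear_combination h
  rw [hE] at h'
  exact_mod_cast h'

lemma card_mul_sq_le_sum_norm_expSum_mul (hψ : ψ.IsPrimitive) {A B : Finset R} (hBA : B ⊆ A) :
    Fintype.card R * (#B : ℝ) ^ 2 ≤
      (∑ y, ‖expSum ψ A y‖) * (√(#A : ℝ) * √(B.addEnergy B : ℝ)) := by
  have hq : (0 : ℝ) < Fintype.card R := by exact_mod_cast Fintype.card_pos
  have hcorr : Fintype.card R * (#B : ℝ) ≤ ∑ y, ‖expSum ψ A y‖ * ‖expSum ψ B y‖ := by
    have h := congrArg norm (sum_expSum_mul_conj hψ A B)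
    rw [inter_eq_right.2 hBA, norm_mul, Complex.norm_natCast, Complex.norm_natCast] at h
    rw [← h]
    refine (norm_sum_le _ _).trans_eq (sum_congr rfl fun y _ => ?_)
    rw [norm_mul, Complex.norm_conj]
  refine le_of_mul_le_mul_left ?_ hq
  calc Fintype.card R * (Fintype.card R * (#B : ℝ) ^ 2)
      = (Fintype.card R * (#B : ℝ)) ^ 2 := by ring
    _ ≤ (∑ y, ‖expSum ψ A y‖ * ‖expSum ψ B y‖) ^ 2 := by gcongr
    _ ≤ (∑ y, ‖expSum ψ A y‖) * (√(∑ y, ‖expSum ψ A y‖ ^ 2) * √(∑ y, ‖expSum ψ B y‖ ^ 4)) :=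
      sq_sum_mul_le_sum_mul_sqrt_mul_sqrt _ _ fun y _ => norm_nonneg _
    _ = Fintype.card R * ((∑ y, ‖expSum ψ A y‖) * (√(#A : ℝ) * √(B.addEnergy B : ℝ))) := by
      rw [sum_norm_expSum_sq hψ, sum_norm_expSum_pow_four hψ, Real.sqrt_mul hq.le,
        Real.sqrt_mul hq.le]
      linear_combination (∑ y, ‖expSum ψ A y‖) * √(#A : ℝ) * √(B.addEnergy B : ℝ) *
        Real.mul_self_sqrt hq.le

end ExpSum

section canonical
variable (p : ℕ) [Fact p.Prime] (F : Type*) [Field F] [Fintype F] [Algebra (ZMod p) F]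

noncomputable def canonAddChar : AddChar F ℂ :=
  ZMod.stdAddChar.compAddMonoidHom (Algebra.trace (ZMod p) F).toAddMonoidHom

lemma canonChar_eq_canonAddChar (x : F) : canonChar p F x = canonAddChar p F x := by
  rw [canonAddChar, AddChar.compAddMonoidHom_apply, ZMod.stdAddChar_apply, ZMod.toCircle_apply]
  rfl

lemma isPrimitive_canonAddChar : (canonAddChar p F).IsPrimitive := by
  refine AddChar.IsPrimitive.of_ne_one <| AddChar.ne_one_iff.2 ?_
  obtain ⟨a, ha⟩ := Algebra.trace_surjective (ZMod p) F 1
  refine ⟨a, fun h => one_ne_zero (ZMod.injective_stdAddChar (N := p) ?_)⟩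
  rw [AddChar.map_zero_eq_one, ← h, canonAddChar, AddChar.compAddMonoidHom_apply]
  exact congrArg _ ha.symm

lemma sum_canonChar_mul_eq_expSum (A : Finset F) (y : F) :
    ∑ x ∈ A, canonChar p F (x * y) = expSum (canonAddChar p F) A y := by
  simp only [expSum, canonChar_eq_canonAddChar]

end canonical

theorem konyagin_shkredov_l1_bound_general
    (p : ℕ) (hp : p.Prime) (F : Type*) [Field F] [Fintype F]
    [Algebra (ZMod p) F] [DecidableEq F] (X₁ X : Finset F)
    (hsub : X₁ ⊆ X) :
    (X₁.card : ℝ) ^ 2 / (Real.sqrt X.card * Real.sqrt (addEnergy X₁)) ≤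
      (1 / (Fintype.card F : ℝ)) *
        ∑ y : F, ‖∑ x ∈ X, canonChar p F (x * y)‖ := by
  have : Fact p.Prime := ⟨hp⟩
  have hq : (0 : ℝ) < Fintype.card F := by exact_mod_cast Fintype.card_pos
  have key := card_mul_sq_le_sum_norm_expSum_mul (isPrimitive_canonAddChar p F) hsub
  refine div_le_of_le_mul₀ (by positivity) (by positivity) (le_of_mul_le_mul_left ?_ hq)
  simp_rw [sum_canonChar_mul_eq_expSum, show _root_.addEnergy X₁ = X₁.addEnergy X₁ from rfl]
  refine key.trans_eq ?_
  field_simp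

theorem konyagin_shkredov_l1_bound
    (p : ℕ) (hp : p.Prime) (F : Type*) [Field F] [Fintype F]
    [Algebra (ZMod p) F] [DecidableEq F] (X₁ X : Finset F)
    (hX₁ : X₁.Nonempty) (hsub : X₁ ⊆ X) :
    (X₁.card : ℝ) ^ 2 / (Real.sqrt X.card * Real.sqrt (addEnergy X₁)) ≤
      (1 / (Fintype.card F : ℝ)) *
        ∑ y : F, ‖∑ x ∈ X, canonChar p F (x * y)‖ :=
  konyagin_shkredov_l1_bound_general p hp F X₁ X hsub
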